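/- arXiv:math/0512010 — 6 statements merged into one kernel-verified Lean document; each statement's English description precedes it below -/
import Mathlib

section
/- Let S be a finite set of colours and let L assign to each vertex of K_{n,n} a nonempty finite list L(v) ⊆ S. Let H₁ be the hypergraph on vertex set S whose edges are the lists of the vertices on the left side of K_{n,n}, and let H₂ be the hypergraph on vertex set S whose edges are the lists of the vertices on the right side. Then K_{n,n} admits a proper L-colouring if and only if H₁ and H₂ admit disjoint covers. -/
open Finset

/-- Two hypergraphs (given by their edge sets) on the same vertex set `V`
admit disjoint covers: there are disjoint sets `C₁, C₂` of vertices such that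
every edge of the first hypergraph meets `C₁` and every edge of the second
meets `C₂`. -/
def DisjointCovers {V : Type*} (H₁ H₂ : Finset (Finset V)) : Prop :=
  ∃ C₁ C₂ : Finset V, Disjoint C₁ C₂ ∧
    (∀ e ∈ H₁, ∃ v ∈ e, v ∈ C₁) ∧ (∀ e ∈ H₂, ∃ v ∈ e, v ∈ C₂)

/-- `K_{n,n}` admits a proper colouring from the colour scheme `L`. -/
def ListColourable {S : Type*} (n : ℕ) (L : (Fin n ⊕ Fin n) → Finset S) : Prop :=
  ∃ f : (Fin n ⊕ Fin n) → S, (∀ v, f v ∈ L v) ∧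
    ∀ x y, (completeBipartiteGraph (Fin n) (Fin n)).Adj x y → f x ≠ f y

/-- Colouring `K_{n,n}` from lists is equivalent to the existence of disjoint
covers for the two hypergraphs on the colour set whose edges are the lists of
the left side and of the right side, respectively. -/
theorem listColourable_iff_disjointCovers {S : Type*} [Fintype S] [DecidableEq S]
    (n : ℕ) (L : (Fin n ⊕ Fin n) → Finset S) (hL : ∀ v, (L v).Nonempty) :
    ListColourable n L ↔
      DisjointCovers ((Finset.univ : Finset (Fin n)).image (fun i => L (Sum.inl i)))
        ((Finset.univ : Finset (Fin n)).image (fun i => L (Sum.inr i))) := by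
  constructor
  · rintro ⟨f, hf, hadj⟩
    refine ⟨(Finset.univ : Finset (Fin n)).image (fun i => f (Sum.inl i)),
      (Finset.univ : Finset (Fin n)).image (fun i => f (Sum.inr i)), ?_, ?_, ?_⟩
    · rw [Finset.disjoint_left]
      intro a ha hb
      obtain ⟨i, _, hi⟩ := Finset.mem_image.1 ha
      obtain ⟨j, _, hj⟩ := Finset.mem_image.1 hb
      exact hadj (Sum.inl i) (Sum.inr j) (by simp) (hi.trans hj.symm)
    · intro e he
      obtain ⟨i, _, rfl⟩ := Finset.mem_image.1 he
      exact ⟨f (Sum.inl i), hf _, Finset.mem_image.2 ⟨i, Finset.mem_univ i, rfl⟩⟩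
    · intro e he
      obtain ⟨i, _, rfl⟩ := Finset.mem_image.1 he
      exact ⟨f (Sum.inr i), hf _, Finset.mem_image.2 ⟨i, Finset.mem_univ i, rfl⟩⟩
  · rintro ⟨C₁, C₂, hdisj, h₁, h₂⟩
    have g₁ : ∀ i : Fin n, ∃ v, v ∈ L (Sum.inl i) ∧ v ∈ C₁ := by
      intro i
      obtain ⟨v, hv, hvC⟩ := h₁ _ (Finset.mem_image.2 ⟨i, Finset.mem_univ i, rfl⟩)
      exact ⟨v, hv, hvC⟩
    have g₂ : ∀ i : Fin n, ∃ v, v ∈ L (Sum.inr i) ∧ v ∈ C₂ := by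
      intro i
      obtain ⟨v, hv, hvC⟩ := h₂ _ (Finset.mem_image.2 ⟨i, Finset.mem_univ i, rfl⟩)
      exact ⟨v, hv, hvC⟩
    choose a ha haC using g₁
    choose b hb hbC using g₂
    refine ⟨Sum.elim a b, fun v => ?_, fun x y hxy => ?_⟩
    · cases v with
      | inl i => exact ha i
      | inr i => exact hb i
    · have key : ∀ i j : Fin n, a i ≠ b j := fun i j h =>
        Finset.disjoint_left.1 hdisj (haC i) (h ▸ hbC j)
      cases x with
      | inl i =>
        cases y with
        | inl j => simp at hxy
        | inr j => exact key i j
      | inr i =>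
        cases y with
        | inl j => exact fun h => key j i h.symm
        | inr j => simp at hxy
end

section
/- Let N : ℕ → ℕ and for each n let A_n ⊆ {0,1}^{N(n)} be a monotone increasing property with A_n ≠ ∅ and A_n ≠ {0,1}^{N(n)}, and set f_n(p) = μ_p(A_n), where μ_p is the product measure with weight p at 1. For α ∈ (0,1) let p_α(n) be the unique value with f_n(p_α(n)) = α. Suppose that for every α ∈ (0,1) and every C > 0 there exists n₀ such that p_α(n)·f_n′(p_α(n)) > C for all n > n₀. Then the property has a sharp threshold: for every α ∈ (0,1), every δ > 0 and every function p(n), if p(n) ≥ (1+δ)p_α(n) for all n then f_n(p(n)) → 1 as n → ∞, and if p(n) ≤ (1−δ)p_α(n) for all n then f_n(p(n)) → 0 as n → ∞. -/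
open Filter Finset

open scoped Classical

/-- The measure `μ_p(A)` of a set `A ⊆ {0,1}^N` under the product measure with
weight `p` at `1` and `1 − p` at `0`. -/
noncomputable def mu (N : ℕ) (A : Finset (Fin N → Bool)) (p : ℝ) : ℝ :=
  ∑ x ∈ A, p ^ (Finset.univ.filter (fun i => x i = true)).card *
    (1 - p) ^ (Finset.univ.filter (fun i => x i = false)).card

/-!
Write `f = μ_·(A)` for an increasing set `A`. Splitting on the first coordinate, an induction on
the dimension gives `f (1 - f) ≤ p (1 - p) f'`, so `f` is strictly increasing on `[0, 1]` and
`p_γ f'(p_γ) ≥ γ (1 - γ)`. The substitution `γ = f x` turns `∫ dx / x` over `[p_a, p_b]` into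
`log (p_b / p_a) = ∫_a^b dγ / (p_γ f'(p_γ))`. Along the sequence the integrand tends to `0`
pointwise and is bounded by `1 / (a (1 - b))`, so by dominated convergence `p_b(n) / p_a(n) → 1`
for all `0 < a ≤ b < 1`; comparing `p(n)` with `p_γ(n)` for `γ` near `1` (or near `0`) gives
the two limits.
-/

open Set MeasureTheory Real Topology

section ProductMeasure

variable {m : ℕ}

lemma mu_eq_sum_prod (B : Finset (Fin m → Bool)) (p : ℝ) :
    mu m B p = ∑ x ∈ B, ∏ i, (if x i then p else 1 - p) := by
  refine Finset.sum_congr rfl fun x _ => ?_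
  rw [Finset.prod_ite, Finset.prod_const, Finset.prod_const]
  simp only [Bool.not_eq_true]

lemma mu_univ (p : ℝ) : mu m univ p = 1 := by
  rw [mu_eq_sum_prod]
  simpa using (Fintype.prod_sum fun (_ : Fin m) (b : Bool) => if b then p else 1 - p).symm

lemma mu_zero (B : Finset (Fin m → Bool)) : mu m B 0 = if ⊥ ∈ B then 1 else 0 := by
  rw [mu_eq_sum_prod, ← Finset.sum_ite_eq' B ⊥ fun _ => (1 : ℝ)]
  refine Finset.sum_congr rfl fun x _ => ?_
  simp [← Bool.not_eq_false, ite_not, Finset.prod_boole, funext_iff]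

lemma mu_one (B : Finset (Fin m → Bool)) : mu m B 1 = if ⊤ ∈ B then 1 else 0 := by
  rw [mu_eq_sum_prod, ← Finset.sum_ite_eq' B ⊤ fun _ => (1 : ℝ)]
  refine Finset.sum_congr rfl fun x _ => ?_
  simp [Finset.prod_ite_zero, funext_iff]

lemma mu_add_mu_compl (B : Finset (Fin m → Bool)) (p : ℝ) : mu m B p + mu m Bᶜ p = 1 := by
  rw [mu_eq_sum_prod, mu_eq_sum_prod, Finset.sum_add_sum_compl, ← mu_eq_sum_prod, mu_univ]

lemma prod_ite_nonneg (x : Fin m → Bool) {p : ℝ} (hp : p ∈ Icc (0 : ℝ) 1) :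
    0 ≤ ∏ i, (if x i then p else 1 - p) :=
  Finset.prod_nonneg fun i _ => by split <;> linarith [hp.1, hp.2]

lemma mu_nonneg (B : Finset (Fin m → Bool)) {p : ℝ} (hp : p ∈ Icc (0 : ℝ) 1) : 0 ≤ mu m B p := by
  rw [mu_eq_sum_prod]
  exact Finset.sum_nonneg fun x _ => prod_ite_nonneg x hp

lemma mu_le_one (B : Finset (Fin m → Bool)) {p : ℝ} (hp : p ∈ Icc (0 : ℝ) 1) : mu m B p ≤ 1 := by
  linarith [mu_add_mu_compl B p, mu_nonneg Bᶜ hp]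

lemma mu_mono {B C : Finset (Fin m → Bool)} (hBC : B ⊆ C) {p : ℝ} (hp : p ∈ Icc (0 : ℝ) 1) :
    mu m B p ≤ mu m C p := by
  rw [mu_eq_sum_prod, mu_eq_sum_prod]
  exact Finset.sum_le_sum_of_subset_of_nonneg hBC fun x _ _ => prod_ite_nonneg x hp

lemma differentiable_mu (B : Finset (Fin m → Bool)) : Differentiable ℝ (mu m B) := by
  unfold mu
  fun_prop

noncomputable def headFiber (b : Bool) (B : Finset (Fin (m + 1) → Bool)) :
    Finset (Fin m → Bool) :=
  univ.filter fun y => Fin.cons b y ∈ B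

lemma mu_succ (B : Finset (Fin (m + 1) → Bool)) (p : ℝ) :
    mu (m + 1) B p = p * mu m (headFiber true B) p + (1 - p) * mu m (headFiber false B) p := by
  simp only [mu_eq_sum_prod, headFiber, Finset.sum_filter, Finset.mul_sum]
  rw [← Finset.univ_inter B, ← Finset.sum_ite_mem,
    ← (Fin.consEquiv fun _ => Bool).sum_comp, Fintype.sum_prod_type, Fintype.sum_bool]
  simp [Fin.consEquiv, Fin.prod_univ_succ]

@[simp]
lemma mem_headFiber {b : Bool} {B : Finset (Fin (m + 1) → Bool)} {y : Fin m → Bool} :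
    y ∈ headFiber b B ↔ Fin.cons b y ∈ B := by
  simp [headFiber]

lemma isUpperSet_headFiber {B : Finset (Fin (m + 1) → Bool)}
    (hB : IsUpperSet (B : Set (Fin (m + 1) → Bool))) (b : Bool) :
    IsUpperSet (headFiber b B : Set (Fin m → Bool)) := fun y y' hyy' hy => by
  simp only [Finset.mem_coe, mem_headFiber] at hy ⊢
  exact hB (Fin.cons_le_cons.2 ⟨le_rfl, hyy'⟩) hy

lemma headFiber_false_subset {B : Finset (Fin (m + 1) → Bool)}
    (hB : IsUpperSet (B : Set (Fin (m + 1) → Bool))) : headFiber false B ⊆ headFiber true B := by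
  intro y hy
  rw [mem_headFiber] at hy ⊢
  exact hB (Fin.cons_le_cons.2 ⟨Bool.false_le _, le_rfl⟩) hy

theorem mu_mul_one_sub_mu_le {B : Finset (Fin m → Bool)} (hB : IsUpperSet (B : Set (Fin m → Bool)))
    {p : ℝ} (hp : p ∈ Icc (0 : ℝ) 1) :
    mu m B p * (1 - mu m B p) ≤ p * (1 - p) * deriv (mu m B) p := by
  induction m with
  | zero =>
    have hcard : B.card ≤ 1 := by simpa using B.card_le_univ
    rw [show mu 0 B = fun _ => (B.card : ℝ) from funext fun p => by simp [mu_eq_sum_prod],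
      deriv_const]
    interval_cases B.card <;> simp
  | succ m ih =>
    set f₁ := mu m (headFiber true B)
    set f₀ := mu m (headFiber false B)
    have hderiv : HasDerivAt (mu (m + 1) B)
        (f₁ p - f₀ p + p * deriv f₁ p + (1 - p) * deriv f₀ p) p := by
      have h₁ := (differentiable_mu (headFiber true B) p).hasDerivAt
      have h₀ := (differentiable_mu (headFiber false B) p).hasDerivAt
      rw [funext (mu_succ B)]
      exact (((hasDerivAt_id' p).mul h₁).add
        (((hasDerivAt_id' p).const_sub 1).mul h₀)).congr_deriv (by ring)
    have ih₁ := ih (isUpperSet_headFiber hB true)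
    have ih₀ := ih (isUpperSet_headFiber hB false)
    have h₀₁ : f₀ p ≤ f₁ p := mu_mono (headFiber_false_subset hB) hp
    have hgap : 0 ≤ (f₁ p - f₀ p) * (1 - (f₁ p - f₀ p)) :=
      mul_nonneg (sub_nonneg.2 h₀₁)
        (by linarith [mu_nonneg (headFiber false B) hp, mu_le_one (headFiber true B) hp])
    have hp' : 0 ≤ 1 - p := sub_nonneg.2 hp.2
    rw [hderiv.deriv, mu_succ]
    -- concavity of `t ↦ t (1 - t)`: for `f = p f₁ + (1 - p) f₀`,
    -- `p f₁ (1 - f₁) + (1 - p) f₀ (1 - f₀) + p (1 - p) (f₁ - f₀)`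
    -- `= f (1 - f) + p (1 - p) (f₁ - f₀) (1 - (f₁ - f₀))`
    nlinarith [mul_le_mul_of_nonneg_left ih₁ hp.1, mul_le_mul_of_nonneg_left ih₀ hp',
      mul_nonneg (mul_nonneg hp.1 hp') hgap]

lemma mu_pos {B : Finset (Fin m → Bool)} (hB : B.Nonempty) {p : ℝ} (hp : p ∈ Ioo (0 : ℝ) 1) :
    0 < mu m B p := by
  obtain ⟨x, hx⟩ := hB
  calc 0 < mu m {x} p := by
        rw [mu_eq_sum_prod, Finset.sum_singleton]
        exact Finset.prod_pos fun i _ => by split <;> linarith [hp.1, hp.2]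
    _ ≤ mu m B p := mu_mono (Finset.singleton_subset_iff.2 hx) (Ioo_subset_Icc_self hp)

lemma mu_lt_one {B : Finset (Fin m → Bool)} (hB : B ≠ Finset.univ) {p : ℝ}
    (hp : p ∈ Ioo (0 : ℝ) 1) : mu m B p < 1 := by
  have := mu_pos ((compl_ne_univ_iff_nonempty Bᶜ).1 (by rwa [compl_compl])) hp
  linarith [mu_add_mu_compl B p]

lemma deriv_mu_pos {B : Finset (Fin m → Bool)} (hB : IsUpperSet (B : Set (Fin m → Bool)))
    (hne : B.Nonempty) (hnf : B ≠ Finset.univ) {p : ℝ} (hp : p ∈ Ioo (0 : ℝ) 1) :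
    0 < deriv (mu m B) p := by
  have hvar : 0 < mu m B p * (1 - mu m B p) :=
    mul_pos (mu_pos hne hp) (sub_pos.2 (mu_lt_one hnf hp))
  exact pos_of_mul_pos_right (hvar.trans_le (mu_mul_one_sub_mu_le hB (Ioo_subset_Icc_self hp)))
    (mul_pos hp.1 (sub_pos.2 hp.2)).le

lemma strictMonoOn_mu {B : Finset (Fin m → Bool)} (hB : IsUpperSet (B : Set (Fin m → Bool)))
    (hne : B.Nonempty) (hnf : B ≠ Finset.univ) : StrictMonoOn (mu m B) (Icc 0 1) :=
  strictMonoOn_of_deriv_pos (convex_Icc 0 1) (differentiable_mu B).continuous.continuousOn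
    fun p hp => deriv_mu_pos hB hne hnf (by rwa [interior_Icc] at hp)

end ProductMeasure

theorem setIntegral_inv_mul_deriv_comp_eq_log {f q : ℝ → ℝ} {u v : ℝ} (hu : 0 < u) (huv : u ≤ v)
    (hf : Differentiable ℝ f) (hf' : ∀ x ∈ Icc u v, 0 < deriv f x)
    (hqf : ∀ x ∈ Icc u v, q (f x) = x) :
    ∫ γ in Icc (f u) (f v), (q γ * deriv f (q γ))⁻¹ = log (v / u) := by
  have hmono : StrictMonoOn f (Icc u v) :=
    strictMonoOn_of_deriv_pos (convex_Icc u v) hf.continuous.continuousOn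
      fun x hx => hf' x (interior_subset hx)
  rw [← hf.continuous.continuousOn.image_Icc_of_monotoneOn huv hmono.monotoneOn,
    integral_image_eq_integral_abs_deriv_smul measurableSet_Icc
      (fun x _ => (hf x).hasDerivAt.hasDerivWithinAt) hmono.injOn,
    ← integral_inv_of_pos hu (hu.trans_le huv), intervalIntegral.integral_of_le huv,
    ← integral_Icc_eq_integral_Ioc]
  refine setIntegral_congr_fun measurableSet_Icc fun x hx => ?_
  rw [hqf x hx, abs_of_pos (hf' x hx), smul_eq_mul, mul_inv, mul_left_comm,
    mul_inv_cancel₀ (hf' x hx).ne', mul_one]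

theorem tendsto_integral_inv_of_tendsto_atTop {α : Type*} [MeasurableSpace α] {μ : Measure α}
    [IsFiniteMeasure μ] {g : ℕ → α → ℝ} {c : ℝ} (hc : 0 < c)
    (hmeas : ∀ n, AEStronglyMeasurable (fun x => (g n x)⁻¹) μ)
    (hbound : ∀ n, ∀ᵐ x ∂μ, c ≤ g n x) (hlim : ∀ᵐ x ∂μ, Tendsto (fun n => g n x) atTop atTop) :
    Tendsto (fun n => ∫ x, (g n x)⁻¹ ∂μ) atTop (𝓝 0) := by
  have := tendsto_integral_of_dominated_convergence (fun _ => c⁻¹) hmeas (integrable_const _)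
    (fun n => (hbound n).mono fun x hx => by
      rw [norm_inv, Real.norm_of_nonneg (hc.le.trans hx)]
      exact inv_anti₀ hc hx)
    (hlim.mono fun x hx => hx.inv_tendsto_atTop)
  simpa using this

lemma aestronglyMeasurable_inv_mul_deriv_comp {f q : ℝ → ℝ} {a b : ℝ}
    (hq : MonotoneOn q (Icc a b)) :
    AEStronglyMeasurable (fun γ => (q γ * deriv f (q γ))⁻¹) (volume.restrict (Icc a b)) :=
  ((measurable_id.mul (measurable_deriv f)).inv.comp_aemeasurable
    (hq.integrableOn_isCompact isCompact_Icc).aemeasurable).aestronglyMeasurable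

def IsThreshold (m : ℕ) (B : Finset (Fin m → Bool)) (q : ℝ → ℝ) : Prop :=
  ∀ γ ∈ Ioo (0 : ℝ) 1, q γ ∈ Icc (0 : ℝ) 1 ∧ mu m B (q γ) = γ

namespace IsThreshold

variable {m : ℕ} {B : Finset (Fin m → Bool)} {q : ℝ → ℝ} (hq : IsThreshold m B q)
  (hB : IsUpperSet (B : Set (Fin m → Bool))) (hne : B.Nonempty) (hnf : B ≠ Finset.univ)
include hq

lemma mem_Ioo {γ : ℝ} (hγ : γ ∈ Ioo (0 : ℝ) 1) : q γ ∈ Ioo (0 : ℝ) 1 := by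
  obtain ⟨⟨h0, h1⟩, hqγ⟩ := hq γ hγ
  refine ⟨h0.lt_of_ne ?_, h1.lt_of_ne ?_⟩ <;> rintro h
  · rw [← h, mu_zero] at hqγ
    split_ifs at hqγ <;> linarith [hγ.1, hγ.2]
  · rw [h, mu_one] at hqγ
    split_ifs at hqγ <;> linarith [hγ.1, hγ.2]

include hB hne hnf

lemma monotoneOn : MonotoneOn q (Ioo 0 1) := fun γ hγ γ' hγ' hγγ' => by
  rwa [← (strictMonoOn_mu hB hne hnf).le_iff_le (hq γ hγ).1 (hq γ' hγ').1, (hq γ hγ).2,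
    (hq γ' hγ').2]

lemma apply_mu {x : ℝ} (hx : x ∈ Icc (0 : ℝ) 1) (hmx : mu m B x ∈ Ioo (0 : ℝ) 1) :
    q (mu m B x) = x :=
  (strictMonoOn_mu hB hne hnf).injOn (hq _ hmx).1 hx (hq _ hmx).2

lemma mul_one_sub_le {γ : ℝ} (hγ : γ ∈ Ioo (0 : ℝ) 1) :
    γ * (1 - γ) ≤ q γ * deriv (mu m B) (q γ) := by
  have hqγ := hq.mem_Ioo hγ
  have hvar := mu_mul_one_sub_mu_le hB (Ioo_subset_Icc_self hqγ)
  rw [(hq γ hγ).2] at hvar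
  nlinarith [mul_nonneg (sq_nonneg (q γ)) (deriv_mu_pos hB hne hnf hqγ).le]

lemma log_div_eq_integral {a b : ℝ} (ha : 0 < a) (hab : a ≤ b) (hb : b < 1) :
    log (q b / q a) = ∫ γ in Icc a b, (q γ * deriv (mu m B) (q γ))⁻¹ := by
  have ha' : a ∈ Ioo (0 : ℝ) 1 := ⟨ha, hab.trans_lt hb⟩
  have hb' : b ∈ Ioo (0 : ℝ) 1 := ⟨ha.trans_le hab, hb⟩
  have hqa := hq.mem_Ioo ha'
  have hqb := hq.mem_Ioo hb'
  have hsub : Icc (q a) (q b) ⊆ Ioo 0 1 := Icc_subset_Ioo hqa.1 hqb.2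
  have hmu : ∀ x ∈ Icc (q a) (q b), mu m B x ∈ Icc a b := fun x hx => by
    have hmono := (strictMonoOn_mu hB hne hnf).monotoneOn
    constructor
    · simpa only [(hq a ha').2] using hmono (hq a ha').1 (Ioo_subset_Icc_self (hsub hx)) hx.1
    · simpa only [(hq b hb').2] using hmono (Ioo_subset_Icc_self (hsub hx)) (hq b hb').1 hx.2
  have := setIntegral_inv_mul_deriv_comp_eq_log hqa.1 (hq.monotoneOn hB hne hnf ha' hb' hab)
    (differentiable_mu B) (fun x hx => deriv_mu_pos hB hne hnf (hsub hx))
    (fun x hx => hq.apply_mu hB hne hnf (Ioo_subset_Icc_self (hsub hx))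
      (Icc_subset_Ioo ha hb (hmu x hx)))
  rwa [(hq a ha').2, (hq b hb').2, eq_comm] at this

end IsThreshold

section SharpThreshold

variable {N : ℕ → ℕ} {A : ∀ n, Finset (Fin (N n) → Bool)} {q : ℝ → ℕ → ℝ}
  (hA : ∀ n, IsUpperSet (A n : Set (Fin (N n) → Bool))) (hne : ∀ n, (A n).Nonempty)
  (hnf : ∀ n, A n ≠ Finset.univ) (hq : ∀ n, IsThreshold (N n) (A n) (q · n))
  (hsharp : ∀ γ ∈ Ioo (0 : ℝ) 1,
    Tendsto (fun n => q γ n * deriv (mu (N n) (A n)) (q γ n)) atTop atTop)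
include hA hne hnf hq hsharp

theorem tendsto_threshold_div {a b : ℝ} (ha : 0 < a) (hab : a ≤ b) (hb : b < 1) :
    Tendsto (fun n => q b n / q a n) atTop (𝓝 1) := by
  have hIcc : Icc a b ⊆ Ioo 0 1 := Icc_subset_Ioo ha hb
  have hlog : Tendsto (fun n => log (q b n / q a n)) atTop (𝓝 0) := by
    simp_rw [fun n => (hq n).log_div_eq_integral (hA n) (hne n) (hnf n) ha hab hb]
    refine tendsto_integral_inv_of_tendsto_atTop (mul_pos ha (sub_pos.2 hb))
      (fun n => aestronglyMeasurable_inv_mul_deriv_comp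
        (((hq n).monotoneOn (hA n) (hne n) (hnf n)).mono hIcc))
      (fun n => ae_restrict_of_forall_mem measurableSet_Icc fun γ hγ => ?_)
      (ae_restrict_of_forall_mem measurableSet_Icc fun γ hγ => hsharp γ (hIcc hγ))
    calc a * (1 - b) ≤ γ * (1 - γ) := by nlinarith [hγ.1, hγ.2]
      _ ≤ _ := (hq n).mul_one_sub_le (hA n) (hne n) (hnf n) (hIcc hγ)
  have hpos : ∀ n, 0 < q b n / q a n := fun n =>
    div_pos ((hq n).mem_Ioo (hIcc (right_mem_Icc.2 hab))).1
      ((hq n).mem_Ioo (hIcc (left_mem_Icc.2 hab))).1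
  simpa [Function.comp_def, exp_log (hpos _)] using (continuous_exp.tendsto 0).comp hlog

theorem tendsto_mu_one_of_threshold_le {α δ : ℝ} (hα : α ∈ Ioo (0 : ℝ) 1) (hδ : 0 < δ)
    {p : ℕ → ℝ} (hp : ∀ n, p n ∈ Icc (0 : ℝ) 1) (hup : ∀ n, (1 + δ) * q α n ≤ p n) :
    Tendsto (fun n => mu (N n) (A n) (p n)) atTop (𝓝 1) := by
  refine tendsto_order.2 ⟨fun β hβ => ?_,
    fun β hβ => Eventually.of_forall fun n => (mu_le_one _ (hp n)).trans_lt hβ⟩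
  obtain ⟨γ, hγmax, hγ1⟩ := exists_between (max_lt hα.2 hβ)
  have hαγ : α < γ := (le_max_left α β).trans_lt hγmax
  have hγ : γ ∈ Ioo (0 : ℝ) 1 := ⟨hα.1.trans hαγ, hγ1⟩
  filter_upwards [(tendsto_threshold_div hA hne hnf hq hsharp hα.1 hαγ.le hγ1).eventually
    (gt_mem_nhds (by linarith : (1 : ℝ) < 1 + δ))] with n hn
  have hqγ : q γ n < p n := by
    rw [div_lt_iff₀ ((hq n).mem_Ioo hα).1] at hn
    exact hn.trans_le (hup n)
  calc β < γ := (le_max_right α β).trans_lt hγmax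
    _ = mu (N n) (A n) (q γ n) := ((hq n γ hγ).2).symm
    _ ≤ mu (N n) (A n) (p n) :=
      (strictMonoOn_mu (hA n) (hne n) (hnf n)).monotoneOn (hq n γ hγ).1 (hp n) hqγ.le

theorem tendsto_mu_zero_of_le_threshold {α δ : ℝ} (hα : α ∈ Ioo (0 : ℝ) 1) (hδ : 0 < δ)
    {p : ℕ → ℝ} (hp : ∀ n, p n ∈ Icc (0 : ℝ) 1) (hdown : ∀ n, p n ≤ (1 - δ) * q α n) :
    Tendsto (fun n => mu (N n) (A n) (p n)) atTop (𝓝 0) := by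
  refine tendsto_order.2
    ⟨fun β hβ => Eventually.of_forall fun n => hβ.trans_le (mu_nonneg _ (hp n)), fun β hβ => ?_⟩
  obtain ⟨γ, hγ0, hγmin⟩ := exists_between (lt_min hα.1 hβ)
  have hγα : γ < α := hγmin.trans_le (min_le_left α β)
  have hγ : γ ∈ Ioo (0 : ℝ) 1 := ⟨hγ0, hγα.trans hα.2⟩
  filter_upwards [((tendsto_threshold_div hA hne hnf hq hsharp hγ0 hγα.le hα.2).const_mul
    (1 - δ)).eventually (gt_mem_nhds (by linarith : (1 - δ) * 1 < 1))] with n hn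
  have hpq : p n < q γ n := by
    rw [← mul_div_assoc, div_lt_one ((hq n).mem_Ioo hγ).1] at hn
    exact (hdown n).trans_lt hn
  calc mu (N n) (A n) (p n) ≤ mu (N n) (A n) (q γ n) :=
      (strictMonoOn_mu (hA n) (hne n) (hnf n)).monotoneOn (hp n) (hq n γ hγ).1 hpq.le
    _ = γ := (hq n γ hγ).2
    _ < β := hγmin.trans_le (min_le_right α β)

end SharpThreshold

theorem sharp_threshold_criterion_general (N : ℕ → ℕ) (A : ∀ n, Finset (Fin (N n) → Bool))
    (hmono : ∀ n, ∀ x ∈ A n, ∀ y : Fin (N n) → Bool,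
      (∀ i, x i = true → y i = true) → y ∈ A n)
    (hne : ∀ n, (A n).Nonempty) (hnfull : ∀ n, A n ≠ Finset.univ)
    (pα : ℝ → ℕ → ℝ)
    (hpα : ∀ α : ℝ, 0 < α → α < 1 → ∀ n,
      0 ≤ pα α n ∧ pα α n ≤ 1 ∧ mu (N n) (A n) (pα α n) = α)
    (hderiv : ∀ α : ℝ, 0 < α → α < 1 → ∀ C : ℝ, 0 < C →
      ∃ n₀ : ℕ, ∀ n > n₀, C < pα α n * deriv (fun p => mu (N n) (A n) p) (pα α n)) :
    ∀ α : ℝ, 0 < α → α < 1 → ∀ δ : ℝ, 0 < δ → ∀ p : ℕ → ℝ,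
      (∀ n, 0 ≤ p n ∧ p n ≤ 1) →
      ((∀ n, (1 + δ) * pα α n ≤ p n) →
        Tendsto (fun n => mu (N n) (A n) (p n)) atTop (nhds 1)) ∧
      ((∀ n, p n ≤ (1 - δ) * pα α n) →
        Tendsto (fun n => mu (N n) (A n) (p n)) atTop (nhds 0)) := by
  intro α hα0 hα1 δ hδ p hp
  have hA : ∀ n, IsUpperSet (A n : Set (Fin (N n) → Bool)) := fun n x y hxy hx =>
    hmono n x hx y fun i hi => Bool.le_iff_imp.1 (hxy i) hi
  have hq : ∀ n, IsThreshold (N n) (A n) (pα · n) := fun n γ hγ =>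
    and_assoc.2 (hpα γ hγ.1 hγ.2 n)
  have hsharp : ∀ γ ∈ Ioo (0 : ℝ) 1,
      Tendsto (fun n => pα γ n * deriv (mu (N n) (A n)) (pα γ n)) atTop atTop := fun γ hγ =>
    tendsto_atTop.2 fun C => by
      obtain ⟨n₀, hn₀⟩ := hderiv γ hγ.1 hγ.2 (max C 1) (by positivity)
      exact eventually_atTop.2 ⟨n₀ + 1, fun n hn => (le_max_left _ _).trans (hn₀ n hn).le⟩
  exact ⟨tendsto_mu_one_of_threshold_le hA hne hnfull hq hsharp ⟨hα0, hα1⟩ hδ hp,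
    tendsto_mu_zero_of_le_threshold hA hne hnfull hq hsharp ⟨hα0, hα1⟩ hδ hp⟩

/-- If for every `α ∈ (0,1)` the quantity `p_α(n)·f_n'(p_α(n))` tends to
infinity, then the monotone increasing properties `A n ⊆ {0,1}^{N(n)}` have a
sharp threshold. -/
theorem sharp_threshold_criterion (N : ℕ → ℕ) (A : ∀ n, Finset (Fin (N n) → Bool))
    (hmono : ∀ n, ∀ x ∈ A n, ∀ y : Fin (N n) → Bool,
      (∀ i, x i = true → y i = true) → y ∈ A n)
    (hne : ∀ n, (A n).Nonempty) (hnfull : ∀ n, A n ≠ Finset.univ)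
    (pα : ℝ → ℕ → ℝ)
    (hpα : ∀ α : ℝ, 0 < α → α < 1 → ∀ n,
      0 ≤ pα α n ∧ pα α n ≤ 1 ∧ mu (N n) (A n) (pα α n) = α)
    (hpα_unique : ∀ α : ℝ, 0 < α → α < 1 → ∀ n, ∀ q : ℝ,
      0 ≤ q → q ≤ 1 → mu (N n) (A n) q = α → q = pα α n)
    (hderiv : ∀ α : ℝ, 0 < α → α < 1 → ∀ C : ℝ, 0 < C →
      ∃ n₀ : ℕ, ∀ n > n₀, C < pα α n * deriv (fun p => mu (N n) (A n) p) (pα α n)) :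
    ∀ α : ℝ, 0 < α → α < 1 → ∀ δ : ℝ, 0 < δ → ∀ p : ℕ → ℝ,
      (∀ n, 0 ≤ p n ∧ p n ≤ 1) →
      ((∀ n, (1 + δ) * pα α n ≤ p n) →
        Tendsto (fun n => mu (N n) (A n) (p n)) atTop (nhds 1)) ∧
      ((∀ n, p n ≤ (1 - δ) * pα α n) →
        Tendsto (fun n => mu (N n) (A n) (p n)) atTop (nhds 0)) :=
  sharp_threshold_criterion_general N A hmono hne hnfull pα hpα hderiv
end

section
/- Let G₁ and G₂ be graphs on a common finite vertex set V, and call the edges of G₁ red and the edges of G₂ blue. If the coloured graph G = G₁ ∪ G₂ contains no alternating cycle (neither even nor odd), then G₁ and G₂ admit disjoint covers. -/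
/-- The colour of the `i`-th edge of an alternating sequence whose first edge
has colour `b` (`true` = red, `false` = blue). -/
def altColour (b : Bool) (i : ℕ) : Bool := if Even i then b else !b

/-- The adjacency relation of the red graph `G₁` if `b = true`, and of the
blue graph `G₂` if `b = false`. -/
def colAdj {V : Type*} (G₁ G₂ : SimpleGraph V) (b : Bool) : V → V → Prop :=
  if b then G₁.Adj else G₂.Adj

/-- `v 0, v 1, …, v (m-1)` is an alternating cycle of length `m` in the
coloured graph `G₁ ∪ G₂` (edges of `G₁` red, edges of `G₂` blue), whose first
edge `{v 0, v 1}` has colour `b`: the vertices are distinct and the colours of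
consecutive edges alternate around the cycle.  For even `m` this is an even
alternating cycle; for odd `m` the two edges at `v 0` both get colour `b`
(an odd alternating cycle, with the roles of red and blue possibly swapped). -/
def IsAltCycle {V : Type*} (G₁ G₂ : SimpleGraph V) (b : Bool) (m : ℕ)
    (v : ℕ → V) : Prop :=
  (∀ i < m, ∀ j < m, v i = v j → i = j) ∧
  ∀ i < m, colAdj G₁ G₂ (altColour b i) (v i) (v ((i + 1) % m))

/-- The coloured graph `G₁ ∪ G₂` contains an alternating cycle (even or odd). -/
def HasAltCycle {V : Type*} (G₁ G₂ : SimpleGraph V) : Prop :=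
  ∃ (b : Bool) (m : ℕ) (v : ℕ → V), 2 ≤ m ∧ IsAltCycle G₁ G₂ b m v

/-- `G₁` and `G₂` admit disjoint covers. -/
def GraphDisjointCovers {V : Type*} (G₁ G₂ : SimpleGraph V) : Prop :=
  ∃ C₁ C₂ : Set V, Disjoint C₁ C₂ ∧
    (∀ x y, G₁.Adj x y → x ∈ C₁ ∨ y ∈ C₁) ∧
    (∀ x y, G₂.Adj x y → x ∈ C₂ ∨ y ∈ C₂)

/-! Deciding for every vertex whether it joins `C₁` or `C₂` is a 2-SAT problem: if `x ∉ C_a`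
then every edge `xy` of colour `a` forces `y ∈ C_a`. Chains of such forcings are alternating
walks on pairs (vertex, colour of the last edge), and reversing a walk gives the contrapositive
chain. As in the standard 2-SAT argument, ordering the pairs by a linear extension of
reachability yields a consistent choice unless some `(x, a)` reaches `(x, !a)` and back; that
closed alternating walk, shortened to a minimal one, is an alternating cycle. -/

open Relation

theorem exists_isUpperSet_neg_mem_iff_notMem {α : Type*} [Preorder α] (neg : α → α)
    (hinv : Function.Involutive neg) (hanti : Antitone neg)
    (hneg : ∀ a, ¬ AntisymmRel (· ≤ ·) a (neg a)) :
    ∃ s : Set α, IsUpperSet s ∧ ∀ a, neg a ∈ s ↔ a ∉ s := by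
  let L : α → LinearExtension (Antisymmetrization α (· ≤ ·)) :=
    fun a => toLinearExtension (toAntisymmetrization (· ≤ ·) a)
  have hL : Monotone L := toLinearExtension.monotone.comp toAntisymmetrization_mono
  have hne : ∀ a, L a ≠ L (neg a) := fun a heq => hneg a (Quotient.exact heq)
  refine ⟨{a | L (neg a) ≤ L a}, fun a b hab ha => ?_, fun a => ?_⟩
  · exact (hL (hanti hab)).trans (ha.trans (hL hab))
  · simp only [Set.mem_ofPred_eq, hinv a, not_le]
    exact ⟨fun h => h.lt_of_ne (hne a), le_of_lt⟩

theorem Relation.TransGen.exists_seq {α : Type*} {r : α → α → Prop} {a b : α}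
    (h : TransGen r a b) :
    ∃ n, 0 < n ∧ ∃ f : ℕ → α, f 0 = a ∧ f n = b ∧ ∀ i < n, r (f i) (f (i + 1)) := by
  induction h with
  | @single b hab => exact ⟨1, one_pos, fun i => if i = 0 then a else b, rfl, rfl, by simpa⟩
  | @tail b c _ hbc ih =>
    obtain ⟨n, hn, f, hf0, hfn, hf⟩ := ih
    refine ⟨n + 1, n.succ_pos, fun i => if i ≤ n then f i else c, by simpa, by simp, ?_⟩
    intro i hi
    rcases Nat.lt_or_ge i n with hin | hin
    · simpa [hin.le, Nat.succ_le_of_lt hin] using hf i hin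
    · obtain rfl : i = n := by omega
      simpa [hfn] using hbc

theorem altColour_succ (b : Bool) (i : ℕ) : altColour b (i + 1) = !altColour b i := by
  by_cases h : Even i <;> simp [altColour, Nat.even_add_one, h]

theorem altColour_not (b : Bool) (i : ℕ) : altColour (!b) i = !altColour b i := by
  by_cases h : Even i <;> simp [altColour, h]

theorem altColour_add (b : Bool) (i k : ℕ) :
    altColour (altColour b i) k = altColour b (i + k) := by
  by_cases hi : Even i <;> by_cases hk : Even k <;> simp [altColour, Nat.even_add, hi, hk]

section

variable {V : Type*} {G₁ G₂ : SimpleGraph V} {b : Bool} {x y : V}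

theorem colAdj.ne (h : colAdj G₁ G₂ b x y) : x ≠ y := by
  cases b
  · exact G₂.ne_of_adj h
  · exact G₁.ne_of_adj h

theorem colAdj.symm (h : colAdj G₁ G₂ b x y) : colAdj G₁ G₂ b y x := by
  cases b
  · exact G₂.adj_symm h
  · exact G₁.adj_symm h

variable (G₁ G₂) in
/-- A closed walk `v 0, …, v (m-1), v 0` whose edge colours alternate except possibly at
`v 0`; unlike an alternating cycle it may revisit vertices. -/
def IsAltClosedWalk (b : Bool) (m : ℕ) (v : ℕ → V) : Prop :=
  2 ≤ m ∧ ∀ i < m, colAdj G₁ G₂ (altColour b i) (v i) (v ((i + 1) % m))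

theorem IsAltClosedWalk.segment {m i j : ℕ} {v : ℕ → V} (hw : IsAltClosedWalk G₁ G₂ b m v)
    (hij : i < j) (hjm : j < m) (heq : v i = v j) :
    IsAltClosedWalk G₁ G₂ (altColour b i) (j - i) (fun k => v (i + k)) := by
  have hedge : ∀ k < j - i, colAdj G₁ G₂ (altColour b (i + k)) (v (i + k)) (v (i + k + 1)) :=
    fun k hk => by simpa [Nat.mod_eq_of_lt (by omega : i + k + 1 < m)] using hw.2 (i + k) (by omega)
  refine ⟨?_, fun k hk => ?_⟩
  · by_contra! hlt
    exact (hedge 0 (by omega)).ne (by rw [Nat.add_zero, heq]; congr 1; omega)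
  · rw [altColour_add]
    rcases Nat.lt_or_ge (k + 1) (j - i) with hlast | hlast
    · simpa [Nat.mod_eq_of_lt hlast, Nat.add_assoc] using hedge k hk
    · obtain rfl : k = j - i - 1 := by omega
      simpa [Nat.sub_add_cancel (by omega : 1 ≤ j - i), heq, show i + (j - i - 1) + 1 = j by omega]
        using hedge (j - i - 1) hk

theorem IsAltClosedWalk.hasAltCycle {m : ℕ} {v : ℕ → V} (hw : IsAltClosedWalk G₁ G₂ b m v) :
    HasAltCycle G₁ G₂ := by
  induction m using Nat.strong_induction_on generalizing b v with
  | _ m ih =>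
  by_cases hinj : ∀ i < m, ∀ j < m, v i = v j → i = j
  · exact ⟨b, m, v, hw.1, hinj, hw.2⟩
  push Not at hinj
  obtain ⟨i, hi, j, hj, heq, hne⟩ := hinj
  rcases hne.lt_or_gt with hij | hji
  · exact ih (j - i) (by omega) (hw.segment hij hj heq)
  · exact ih (i - j) (by omega) (hw.segment hji hi heq.symm)

variable (G₁ G₂) in
/-- A step `(u, a) → (w, !a)` along an edge `uw` of colour `!a`. Chains of steps are alternating
walks, the second coordinate recording the colour of the edge just traversed. -/
def AltStep (p q : V × Bool) : Prop :=
  q.2 = !p.2 ∧ colAdj G₁ G₂ q.2 p.1 q.1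

theorem AltStep.reverse {p q : V × Bool} (h : AltStep G₁ G₂ p q) :
    AltStep G₁ G₂ (q.1, !q.2) (p.1, !p.2) := by
  obtain ⟨hq, hadj⟩ := h
  refine ⟨by simp [hq], ?_⟩
  simpa [hq] using hadj.symm

theorem AltStep.snd_eq_altColour {n : ℕ} {f : ℕ → V × Bool}
    (hf : ∀ i < n, AltStep G₁ G₂ (f i) (f (i + 1))) : ∀ k ≤ n, (f k).2 = altColour (f 0).2 k
  | 0, _ => by simp [altColour]
  | k + 1, hk => by
    rw [(hf k (by omega)).1, snd_eq_altColour hf k (by omega), altColour_succ]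

theorem hasAltCycle_of_transGen_altStep {p : V × Bool} (h : TransGen (AltStep G₁ G₂) p p) :
    HasAltCycle G₁ G₂ := by
  obtain ⟨n, hn, f, hf0, hfn, hf⟩ := h.exists_seq
  have hn2 : 2 ≤ n := by
    by_contra! hn1
    obtain rfl : n = 1 := by omega
    have := (hf 0 one_pos).1
    simp [hf0, hfn] at this
  refine IsAltClosedWalk.hasAltCycle (b := !p.2) (v := fun i => (f i).1) ⟨hn2, fun i hi => ?_⟩
  have hcol : altColour (!p.2) i = (f (i + 1)).2 := by
    rw [AltStep.snd_eq_altColour hf (i + 1) hi, hf0, altColour_succ, altColour_not]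
  have hnext : f ((i + 1) % n) = f (i + 1) := by
    rcases Nat.lt_or_ge (i + 1) n with hlt | hge
    · rw [Nat.mod_eq_of_lt hlt]
    · obtain rfl : i + 1 = n := by omega
      rw [Nat.mod_self, hf0, hfn]
  simpa only [hcol, hnext] using (hf i hi).2

variable (G₁ G₂) in
abbrev altReach : Preorder (V × Bool) where
  le := ReflTransGen (AltStep G₁ G₂)
  le_refl _ := .refl
  le_trans _ _ _ := .trans

theorem reflTransGen_altStep_reverse {p q : V × Bool} (h : ReflTransGen (AltStep G₁ G₂) p q) :
    ReflTransGen (AltStep G₁ G₂) (q.1, !q.2) (p.1, !p.2) := by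
  induction h with
  | refl => exact .refl
  | tail _ hbc ih => exact .head hbc.reverse ih

theorem hasAltCycle_of_reflTransGen_altStep_flip {p : V × Bool}
    (h₁ : ReflTransGen (AltStep G₁ G₂) p (p.1, !p.2))
    (h₂ : ReflTransGen (AltStep G₁ G₂) (p.1, !p.2) p) : HasAltCycle G₁ G₂ := by
  have hne : p ≠ (p.1, !p.2) := fun h => by simpa using congrArg Prod.snd h
  exact hasAltCycle_of_transGen_altStep
    (((reflTransGen_iff_eq_or_transGen.1 h₁).resolve_left hne.symm).trans_left h₂)

end

theorem disjointCovers_of_no_altCycle_general {V : Type*}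
    (G₁ G₂ : SimpleGraph V) (h : ¬ HasAltCycle G₁ G₂) :
    GraphDisjointCovers G₁ G₂ := by
  let _ := altReach G₁ G₂
  obtain ⟨s, hs, hflip⟩ := exists_isUpperSet_neg_mem_iff_notMem (fun p : V × Bool => (p.1, !p.2))
    (fun p => by simp) (fun _ _ => reflTransGen_altStep_reverse)
    (fun p hp => h (hasAltCycle_of_reflTransGen_altStep_flip hp.1 hp.2))
  have hcover : ∀ b x y, colAdj G₁ G₂ b x y → (x, b) ∈ s ∨ (y, b) ∈ s := fun b x y hxy =>
    or_iff_not_imp_left.2 fun hx =>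
      hs (ReflTransGen.single ⟨by simp, hxy⟩ : (x, !b) ≤ (y, b)) ((hflip (x, b)).2 hx)
  exact ⟨{x | (x, true) ∈ s}, {x | (x, false) ∈ s},
    Set.disjoint_left.2 fun x h₁ h₂ => (hflip (x, true)).1 h₂ h₁, hcover true, hcover false⟩

/-- If the coloured graph `G₁ ∪ G₂` (edges of `G₁` red, edges of `G₂` blue)
contains no alternating cycle, neither even nor odd, then `G₁` and `G₂` admit
disjoint covers. -/
theorem disjointCovers_of_no_altCycle {V : Type*} [Fintype V]
    (G₁ G₂ : SimpleGraph V) (h : ¬ HasAltCycle G₁ G₂) :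
    GraphDisjointCovers G₁ G₂ :=
  disjointCovers_of_no_altCycle_general G₁ G₂ h
end

section
/- Let G = (V, E) be a connected graph on m vertices with maximum degree at most k (k ≥ 1). Then for every natural number l ≥ 1 there exist pairwise disjoint vertex sets V₁,…,V_t ⊆ V such that: (1) lk ≤ |V_i| ≤ lk² for every 1 ≤ i ≤ t; (2) |V₁| + ⋯ + |V_t| ≥ m − lk; and (3) the induced subgraph G[V_i] is connected for every 1 ≤ i ≤ t. -/
/-!
Root a connected vertex set `s` at `r`. Every component of `s - r` contains a neighbour of `r`,
so there are at most `k` of them, and removing one of them leaves `s` connected. If all of them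
have fewer than `n` vertices, then `|s| ≤ k (n - 1) + 1 ≤ n k`. Otherwise take a component `C`
with at least `n` vertices and its vertex `u` adjacent to `r`: either `|C| ≤ n k` and `C` is cut
off, or recursively (rooted at `u`) a piece `P ⊆ C - u` is cut off with `C - P` connected, and
then `s - P` is connected through the edge `r u`. Cutting off pieces of size in `[n, n k]`, with
`n = l k`, until fewer than `n` vertices remain gives the partition.
-/

namespace SimpleGraph

variable {V : Type*} (G : SimpleGraph V)

/-- The vertex set of the connected component of `v` in `G.induce s`; empty when `v ∉ s`. -/
def componentIn (s : Set V) (v : V) : Set V :=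
  ⋃₀ {c | c ⊆ s ∧ v ∈ c ∧ (G.induce c).Connected}

variable {G} {s c : Set V} {a b v w x : V}

lemma induce_singleton_connected (v : V) : (G.induce {v}).Connected := by
  rw [induce_singleton_eq_top]
  exact connected_top

lemma subset_componentIn (hcs : c ⊆ s) (hv : v ∈ c) (hc : (G.induce c).Connected) :
    c ⊆ G.componentIn s v :=
  Set.subset_sUnion_of_mem ⟨hcs, hv, hc⟩

lemma componentIn_subset : G.componentIn s v ⊆ s :=
  Set.sUnion_subset fun _ hc ↦ hc.1

lemma mem_of_mem_componentIn (hw : w ∈ G.componentIn s v) : v ∈ s := by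
  obtain ⟨c, ⟨hcs, hv, -⟩, -⟩ := hw
  exact hcs hv

lemma mem_componentIn_self (hv : v ∈ s) : v ∈ G.componentIn s v :=
  subset_componentIn (Set.singleton_subset_iff.2 hv) rfl (induce_singleton_connected v) rfl

lemma induce_componentIn_connected (hv : v ∈ s) : (G.induce (G.componentIn s v)).Connected :=
  induce_sUnion_connected_of_pairwise_not_disjoint
    ⟨{v}, Set.singleton_subset_iff.2 hv, rfl, induce_singleton_connected v⟩
    (fun hc hd ↦ ⟨v, hc.2.1, hd.2.1⟩) (fun hc ↦ hc.2.2)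

lemma subset_componentIn_of_inter_nonempty (hcs : c ⊆ s) (hc : (G.induce c).Connected)
    (hmeet : (c ∩ G.componentIn s v).Nonempty) : c ⊆ G.componentIn s v := by
  have hv : v ∈ s := mem_of_mem_componentIn hmeet.some_mem.2
  refine Set.subset_union_left.trans (subset_componentIn (c := c ∪ G.componentIn s v)
    (Set.union_subset hcs componentIn_subset) (Or.inr (mem_componentIn_self hv)) ?_)
  exact induce_union_connected hc.preconnected (induce_componentIn_connected hv).preconnected hmeet

lemma mem_componentIn_of_adj (hw : w ∈ G.componentIn s v) (hx : x ∈ s) (hadj : G.Adj w x) :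
    x ∈ G.componentIn s v :=
  subset_componentIn_of_inter_nonempty (Set.pair_subset (componentIn_subset hw) hx)
    (induce_pair_connected_of_adj hadj) ⟨w, Or.inl rfl, hw⟩ (Or.inr rfl)

lemma mem_componentIn_comm (hw : w ∈ G.componentIn s v) : v ∈ G.componentIn s w := by
  have hv : v ∈ s := mem_of_mem_componentIn hw
  exact subset_componentIn componentIn_subset hw (induce_componentIn_connected hv)
    (mem_componentIn_self hv)

lemma Preconnected.exists_adj_boundary {A : Set V} (hs : (G.induce s).Preconnected)
    (ha : a ∈ s) (haA : a ∈ A) (hb : b ∈ s) (hbA : b ∉ A) :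
    ∃ x ∈ A, ∃ y ∈ s \ A, G.Adj x y := by
  obtain ⟨q⟩ := hs ⟨a, ha⟩ ⟨b, hb⟩
  let p : G.Walk a b := q.map (Embedding.induce s).toHom
  obtain ⟨d, hd, hdA, hdA'⟩ := p.exists_boundary_dart A haA hbA
  obtain ⟨y, -, hy⟩ :=
    List.mem_map.1 (Walk.support_map _ q ▸ p.dart_snd_mem_support_of_mem_darts hd)
  exact ⟨d.fst, hdA, d.snd, ⟨hy ▸ y.2, hdA'⟩, d.adj⟩

lemma Preconnected.exists_adj_mem_componentIn_sdiff_singleton (hs : (G.induce s).Preconnected)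
    {r : V} (hr : r ∈ s) (hw : w ∈ s \ {r}) :
    ∃ u, G.Adj r u ∧ w ∈ G.componentIn (s \ {r}) u := by
  obtain ⟨x, hx, y, ⟨hys, hyA⟩, hxy⟩ :=
    hs.exists_adj_boundary hw.1 (mem_componentIn_self hw) hr
      (fun h ↦ (componentIn_subset h).2 rfl)
  by_cases hyr : y = r
  · subst hyr
    exact ⟨x, hxy.symm, mem_componentIn_comm hx⟩
  · exact absurd (mem_componentIn_of_adj hx ⟨hys, hyr⟩ hxy) hyA

lemma Connected.induce_sdiff_componentIn_sdiff_singleton (hs : (G.induce s).Connected)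
    {r : V} (hr : r ∈ s) (u : V) : (G.induce (s \ G.componentIn (s \ {r}) u)).Connected := by
  set C := G.componentIn (s \ {r}) u
  have hrC : r ∈ s \ C := ⟨hr, fun h ↦ (componentIn_subset h).2 rfl⟩
  refine induce_connected_of_patches r hrC fun {w} hw ↦ ?_
  by_cases hwr : w = r
  · subst hwr
    exact ⟨{w}, Set.singleton_subset_iff.2 hw, rfl, rfl, Reachable.rfl⟩
  obtain ⟨x, hrx, hwx⟩ :=
    hs.preconnected.exists_adj_mem_componentIn_sdiff_singleton hr ⟨hw.1, hwr⟩
  have hx : x ∈ s \ {r} := mem_of_mem_componentIn hwx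
  set D := G.componentIn (s \ {r}) x
  have hDC : D ⊆ s \ C := fun y hy ↦ ⟨(componentIn_subset hy).1, fun hyC ↦ hw.2 <|
    subset_componentIn_of_inter_nonempty componentIn_subset (induce_componentIn_connected hx)
      ⟨y, hy, hyC⟩ hwx⟩
  have hrD : (G.induce ({r} ∪ D)).Connected := connected_induce_union
    (induce_singleton_connected r).preconnected (induce_componentIn_connected hx).preconnected
    rfl (mem_componentIn_self hx) hrx
  exact ⟨{r} ∪ D, Set.union_subset (Set.singleton_subset_iff.2 hrC) hDC, Or.inl rfl, Or.inr hwx,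
    hrD.preconnected _ _⟩

lemma Preconnected.ncard_le_degree_mul_add_one [Finite V] (hs : (G.induce s).Preconnected)
    {r : V} [Fintype (G.neighborSet r)] (hr : r ∈ s) {n : ℕ}
    (hsmall : ∀ u, G.Adj r u → (G.componentIn (s \ {r}) u).ncard ≤ n) :
    s.ncard ≤ G.degree r * n + 1 := by
  have hcover : s \ {r} ⊆ ⋃ u ∈ G.neighborFinset r, G.componentIn (s \ {r}) u := by
    intro w hw
    obtain ⟨u, hru, hwu⟩ := hs.exists_adj_mem_componentIn_sdiff_singleton hr hw
    exact Set.mem_biUnion ((mem_neighborFinset G r u).2 hru) hwu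
  calc s.ncard = (s \ {r}).ncard + 1 := (Set.ncard_sdiff_singleton_add_one hr).symm
    _ ≤ ∑ u ∈ G.neighborFinset r, (G.componentIn (s \ {r}) u).ncard + 1 := by
      gcongr
      exact (Set.ncard_le_ncard hcover).trans (Finset.set_ncard_biUnion_le _ _)
    _ ≤ G.degree r * n + 1 := by
      gcongr
      simpa [card_neighborFinset_eq_degree] using Finset.sum_le_card_nsmul _ _ n
        fun u hu ↦ hsmall u ((mem_neighborFinset G r u).1 hu)

section Pieces

variable [Fintype V] [DecidableRel G.Adj] {n k : ℕ}

theorem Connected.exists_piece (hn : 1 ≤ n) (hk : 1 ≤ k) (hdeg : G.maxDegree ≤ k) {s : Set V}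
    (hs : (G.induce s).Connected) {r : V} (hr : r ∈ s) (hlarge : n * k < s.ncard) :
    ∃ P ⊆ s \ {r}, (G.induce P).Connected ∧ n ≤ P.ncard ∧ P.ncard ≤ n * k ∧
      (G.induce (s \ P)).Connected := by
  by_cases hheavy : ∃ u, G.Adj r u ∧ n ≤ (G.componentIn (s \ {r}) u).ncard
  · obtain ⟨u, hru, hnC⟩ := hheavy
    set C := G.componentIn (s \ {r}) u
    have hu : u ∈ s \ {r} :=
      mem_of_mem_componentIn (Set.nonempty_of_ncard_ne_zero (s := C) (by omega)).some_mem
    have hC : (G.induce C).Connected := induce_componentIn_connected hu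
    have hsC : (G.induce (s \ C)).Connected := hs.induce_sdiff_componentIn_sdiff_singleton hr u
    by_cases hCsmall : C.ncard ≤ n * k
    · exact ⟨C, componentIn_subset, hC, hnC, hCsmall, hsC⟩
    have : C.ncard < s.ncard :=
      (Set.ncard_le_ncard componentIn_subset).trans_lt (Set.ncard_sdiff_singleton_lt_of_mem hr)
    obtain ⟨P, hPC, hP, hnP, hPnk, hCP⟩ :=
      hC.exists_piece hn hk hdeg (mem_componentIn_self hu) (not_le.1 hCsmall)
    refine ⟨P, fun x hx ↦ componentIn_subset (hPC hx).1, hP, hnP, hPnk, ?_⟩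
    rw [← Set.sdiff_union_sdiff_cancel (fun x hx ↦ (componentIn_subset hx).1)
      (hPC.trans Set.sdiff_subset)]
    exact connected_induce_union hsC.preconnected hCP.preconnected
      ⟨hr, fun h ↦ (componentIn_subset h).2 rfl⟩ ⟨mem_componentIn_self hu, fun h ↦ (hPC h).2 rfl⟩
      hru
  · push Not at hheavy
    have hsn : s.ncard ≤ G.degree r * (n - 1) + 1 := hs.preconnected.ncard_le_degree_mul_add_one
      hr fun u hru ↦ Nat.le_sub_one_of_lt (hheavy u hru)
    have : G.degree r * (n - 1) + 1 ≤ n * k := calc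
      G.degree r * (n - 1) + 1 ≤ k * (n - 1) + k := by
        gcongr
        exact (G.degree_le_maxDegree r).trans hdeg
      _ = n * k := by rw [← mul_add_one, Nat.sub_add_cancel hn, mul_comm]
    omega
termination_by s.ncard

theorem Connected.exists_pieces (hn : 1 ≤ n) (hk : 1 ≤ k) (hdeg : G.maxDegree ≤ k) {s : Set V}
    (hs : (G.induce s).Connected) :
    ∃ L : List (Set V), L.Pairwise Disjoint ∧
      (∀ P ∈ L, P ⊆ s ∧ (G.induce P).Connected ∧ n ≤ P.ncard ∧ P.ncard ≤ n * k) ∧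
      s.ncard ≤ (L.map Set.ncard).sum + n := by
  by_cases hsmall : s.ncard ≤ n * k
  · by_cases hns : n ≤ s.ncard
    · exact ⟨[s], by simp, by simp [hs, hns, hsmall], by simp⟩
    · exact ⟨[], by simp, by simp, by simpa using (not_le.1 hns).le⟩
  obtain ⟨⟨r, hr⟩⟩ := hs.nonempty
  obtain ⟨P, hPs, hP, hnP, hPnk, hsP⟩ := hs.exists_piece hn hk hdeg hr (not_le.1 hsmall)
  have hPs' : P ⊆ s := hPs.trans Set.sdiff_subset
  have hcard : (s \ P).ncard + P.ncard = s.ncard := Set.ncard_sdiff_add_ncard_of_subset hPs'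
  have : (s \ P).ncard < s.ncard := by omega
  obtain ⟨L, hL, hLs, hcover⟩ := hsP.exists_pieces hn hk hdeg
  refine ⟨P :: L, ?_, ?_, ?_⟩
  · exact List.pairwise_cons.2
      ⟨fun Q hQ ↦ Set.disjoint_of_subset_right (hLs Q hQ).1 Set.disjoint_sdiff_right, hL⟩
  · simp only [List.mem_cons, forall_eq_or_imp]
    exact ⟨⟨hPs', hP, hnP, hPnk⟩, fun Q hQ ↦ ⟨(hLs Q hQ).1.trans Set.sdiff_subset, (hLs Q hQ).2⟩⟩
  · simp only [List.map_cons, List.sum_cons]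
    omega
termination_by s.ncard

end Pieces

end SimpleGraph

theorem connected_partition_into_connected_pieces_general {V : Type*} [Fintype V]
    (G : SimpleGraph V) [DecidableRel G.Adj]
    (k : ℕ) (hk : 1 ≤ k) (hconn : G.Connected) (hdeg : G.maxDegree ≤ k)
    (l : ℕ) (hl : 1 ≤ l) :
    ∃ (t : ℕ) (Vs : Fin t → Finset V),
      (∀ i j, i ≠ j → Disjoint (Vs i) (Vs j)) ∧
      (∀ i, l * k ≤ (Vs i).card ∧ (Vs i).card ≤ l * k ^ 2) ∧
      Fintype.card V ≤ (∑ i, (Vs i).card) + l * k ∧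
      ∀ i, (G.induce (↑(Vs i) : Set V)).Connected := by
  classical
  obtain ⟨L, hdisj, hpieces, hcover⟩ :=
    (G.induceUnivIso.connected_iff.2 hconn).exists_pieces (Nat.mul_pos hl hk) hk hdeg
  refine ⟨L.length, fun i ↦ L[i].toFinset, fun i j hij ↦ ?_, fun i ↦ ?_, ?_, fun i ↦ ?_⟩
  · rw [Set.disjoint_toFinset]
    rcases lt_or_gt_of_ne hij with h | h
    exacts [hdisj.rel_get_of_lt h, (hdisj.rel_get_of_lt h).symm]
  · rw [← Set.ncard_eq_toFinset_card', sq, ← mul_assoc]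
    exact (hpieces _ (List.getElem_mem _)).2.2
  · simp only [← Set.ncard_eq_toFinset_card']
    simpa [Set.ncard_univ] using hcover
  · rw [Set.coe_toFinset]
    exact (hpieces _ (List.getElem_mem _)).2.1

/-- Every connected graph on `m` vertices with maximum degree at most `k` can,
for every `l ≥ 1`, be partitioned into disjoint connected pieces `V₁, …, V_t`,
each of size between `l·k` and `l·k²`, covering all but at most `l·k`
vertices. -/
theorem connected_partition_into_connected_pieces {V : Type*} [Fintype V]
    [DecidableEq V] (G : SimpleGraph V) [DecidableRel G.Adj]
    (k : ℕ) (hk : 1 ≤ k) (hconn : G.Connected) (hdeg : G.maxDegree ≤ k)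
    (l : ℕ) (hl : 1 ≤ l) :
    ∃ (t : ℕ) (Vs : Fin t → Finset V),
      (∀ i j, i ≠ j → Disjoint (Vs i) (Vs j)) ∧
      (∀ i, l * k ≤ (Vs i).card ∧ (Vs i).card ≤ l * k ^ 2) ∧
      Fintype.card V ≤ (∑ i, (Vs i).card) + l * k ∧
      ∀ i, (G.induce (↑(Vs i) : Set V)).Connected :=
  connected_partition_into_connected_pieces_general G k hk hconn hdeg l hl
end

section
/- Let n ≥ k ≥ 1 be integers. For every integer a with 0 ≤ a ≤ n, (1 − C(a,k)/C(n,k)) · (1 − C(n−a,k)/C(n,k)) ≤ (1 − C(⌊n/2⌋,k)/C(n,k)) · (1 − C(⌈n/2⌉,k)/C(n,k)), where C(y,k) denotes the binomial coefficient (with C(y,k) = 0 for y < k). -/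
private lemma bsm_step (n k : ℕ) (hk : 1 ≤ k) (hkn : k ≤ n) (a : ℕ)
    (h2 : 2 * (a + 1) ≤ n) :
    (1 - (a.choose k : ℝ) / (n.choose k)) *
        (1 - ((n - a).choose k : ℝ) / (n.choose k)) ≤
      (1 - ((a + 1).choose k : ℝ) / (n.choose k)) *
        (1 - ((n - (a + 1)).choose k : ℝ) / (n.choose k)) := by
  obtain ⟨m, rfl⟩ : ∃ m, k = m + 1 := ⟨k - 1, by omega⟩
  have hN : (0:ℝ) < (n.choose (m+1) : ℝ) := by exact_mod_cast Nat.choose_pos hkn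
  have e1 : (a + 1).choose (m + 1) = a.choose m + a.choose (m + 1) :=
    Nat.choose_succ_succ a m
  have e2 : n - a = (n - (a + 1)) + 1 := by omega
  have e3 : (n - a).choose (m + 1)
      = (n - (a + 1)).choose m + (n - (a + 1)).choose (m + 1) := by
    rw [e2]; exact Nat.choose_succ_succ _ m
  have hde : (a.choose m : ℝ) ≤ ((n - (a + 1)).choose m : ℝ) := by
    exact_mod_cast Nat.choose_le_choose m (by omega : a ≤ n - (a + 1))
  have hxy : (a.choose (m+1) : ℝ) ≤ ((n - (a + 1)).choose (m+1) : ℝ) := by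
    exact_mod_cast Nat.choose_le_choose (m+1) (by omega : a ≤ n - (a + 1))
  have hyn : ((n - (a + 1)).choose (m+1) : ℝ) ≤ (n.choose (m+1) : ℝ) := by
    exact_mod_cast Nat.choose_le_choose (m+1) (by omega : n - (a + 1) ≤ n)
  rw [e1, e3]
  push_cast
  set N : ℝ := (n.choose (m+1) : ℝ)
  set X : ℝ := (a.choose (m+1) : ℝ)
  set D : ℝ := (a.choose m : ℝ)
  set Y : ℝ := ((n - (a + 1)).choose (m+1) : ℝ)
  set E : ℝ := ((n - (a + 1)).choose m : ℝ)
  have hD : (0:ℝ) ≤ D := by positivity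
  have hu : X / N ≤ Y / N := by gcongr
  have hde' : D / N ≤ E / N := by gcongr
  have hy1 : Y / N ≤ 1 := by
    rw [div_le_one hN]; exact hyn
  have hd0 : (0:ℝ) ≤ D / N := div_nonneg hD hN.le
  have hfield : ((D + X) : ℝ) / N = D / N + X / N := add_div D X N
  have hfield2 : ((E + Y) : ℝ) / N = E / N + Y / N := add_div E Y N
  rw [hfield, hfield2]
  nlinarith [mul_nonneg (sub_nonneg.2 hde') (sub_nonneg.2 (hu.trans hy1)),
    mul_nonneg hd0 (sub_nonneg.2 hu)]

private lemma bsm_upto (n k : ℕ) (hk : 1 ≤ k) (hkn : k ≤ n) :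
    ∀ d a, a + d = n / 2 →
    (1 - (a.choose k : ℝ) / (n.choose k)) *
        (1 - ((n - a).choose k : ℝ) / (n.choose k)) ≤
      (1 - ((n / 2).choose k : ℝ) / (n.choose k)) *
        (1 - ((n - n / 2).choose k : ℝ) / (n.choose k))
  | 0, a, h => by rw [show a = n / 2 by omega]
  | d + 1, a, h =>
    le_trans (bsm_step n k hk hkn a (by omega))
      (bsm_upto n k hk hkn d (a + 1) (by omega))

/-- By convexity of `y ↦ C(y,k)`, the quantity
`(1 − C(a,k)/C(n,k))·(1 − C(n−a,k)/C(n,k))` is maximized over `0 ≤ a ≤ n` at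
the balanced split `a = ⌊n/2⌋`. -/
theorem balanced_split_maximizes (n k : ℕ) (hk : 1 ≤ k) (hkn : k ≤ n)
    (a : ℕ) (ha : a ≤ n) :
    (1 - (a.choose k : ℝ) / (n.choose k)) *
        (1 - ((n - a).choose k : ℝ) / (n.choose k)) ≤
      (1 - ((n / 2).choose k : ℝ) / (n.choose k)) *
        (1 - (((n + 1) / 2).choose k : ℝ) / (n.choose k)) := by
  have hhalf : n - n / 2 = (n + 1) / 2 := by omega
  rw [← hhalf]
  rcases le_or_gt a (n / 2) with h | h
  · exact bsm_upto n k hk hkn (n / 2 - a) a (by omega)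
  · have key := bsm_upto n k hk hkn (n / 2 - (n - a)) (n - a) (by omega)
    rw [show n - (n - a) = a by omega] at key
    linarith [key, mul_comm (1 - ((n - a).choose k : ℝ) / (n.choose k))
      (1 - (a.choose k : ℝ) / (n.choose k))]
end

section
/- For all positive integers k and t and every real 0 < γ ≤ 1 there exists γ′ > 0 such that for all sufficiently large n the following holds: if T is a set of ordered t-tuples of distinct elements of {1,…,n} with |T| > γ·n^t, then choosing t independent uniformly random k-subsets A₁,…,A_t of {1,…,n}, with probability at least γ′ the sets A₁,…,A_t are pairwise disjoint and the tuple (A₁,…,A_t) is T-complete. -/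
/-!
Call a `t × k` array of vertices a complete grid when all `k ^ t` of its transversals lie in `T`.
Splitting off the first coordinate and applying the power-mean inequality twice (over the links
of the vertices, then over the `k` entries of the first row) shows by induction on `t` that the
density of complete grids is at least `(|T| / n ^ t) ^ k ^ t`. Only `O(n ^ (t * k - 1))` arrays
repeat an entry, so for large `n` a positive proportion of all arrays are injective complete
grids. The rows of such a grid form a disjoint `T`-complete tuple of `k`-sets, each tuple arises
from at most `k ^ (t * k)` grids, and `(n.choose k) ^ t ≤ n ^ (t * k)`.
-/

open Finset

lemma pow_sum_div_card_le_sum_pow_div_card {ι : Type*} [Fintype ι] {f : ι → ℝ}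
    (hf : ∀ i, 0 ≤ f i) {m : ℕ} (hm : m ≠ 0) :
    ((∑ i, f i) / Fintype.card ι) ^ m ≤ (∑ i, f i ^ m) / Fintype.card ι := by
  obtain ⟨m, rfl⟩ := Nat.exists_eq_add_one_of_ne_zero hm
  cases isEmpty_or_nonempty ι
  · simp
  rw [div_pow, pow_succ (Fintype.card ι : ℝ) m, ← div_div,
    div_le_div_iff_of_pos_right (by positivity)]
  exact pow_sum_div_card_le_sum_pow (fun i _ => hf i) m

lemma card_filter_eq_sum_card_filter_cons {β : Type*} [Fintype β] {t : ℕ}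
    (P : (Fin (t + 1) → β) → Prop) [DecidablePred P] :
    #{g | P g} = ∑ x : Fin t → β, #{y | P (Fin.cons y x)} := by
  simp only [card_filter]
  rw [← (Fin.consEquiv fun _ => β).sum_comp, Fintype.sum_prod_type, sum_comm]
  rfl

section Injectivity

variable {α β : Type*} [Fintype α] [DecidableEq α] [Fintype β] [DecidableEq β]

/-- `(u, a) ↦ Function.update u p a` is injective on pairs with `u p = u q`: the overwritten
value `u p` is still visible at `q`. -/
lemma card_filter_apply_eq_apply_mul_le {p q : β} (hpq : p ≠ q) :
    #{u : β → α | u p = u q} * Fintype.card α ≤ Fintype.card α ^ Fintype.card β := by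
  calc #{u : β → α | u p = u q} * Fintype.card α
      = #(({u | u p = u q} : Finset (β → α)) ×ˢ (univ : Finset α)) := by
        rw [card_product, card_univ]
    _ ≤ #(univ : Finset (β → α)) := card_le_card_of_injOn
        (fun x : (β → α) × α => Function.update x.1 p x.2) (fun _ _ => mem_univ _) ?_
    _ = Fintype.card α ^ Fintype.card β := by rw [card_univ, Fintype.card_fun]
  rintro ⟨u, a⟩ hu ⟨v, b⟩ hv huv
  simp only [coe_product, Set.mem_prod, mem_coe, mem_filter, mem_univ, true_and, and_true]
    at hu hv huv
  have hab : a = b := by simpa using congrFun huv p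
  refine Prod.ext (funext fun x => ?_) hab
  by_cases hx : x = p
  · change u x = v x
    rw [hx, hu, hv]
    simpa [Function.update_of_ne hpq.symm] using congrFun huv q
  · simpa [Function.update_of_ne hx] using congrFun huv x

lemma card_filter_not_injective_mul_le :
    #{u : β → α | ¬ Function.Injective u} * Fintype.card α ≤
      Fintype.card β ^ 2 * Fintype.card α ^ Fintype.card β := by
  have hcover : ({u | ¬ Function.Injective u} : Finset (β → α)) ⊆
      (univ : Finset β).offDiag.biUnion
        fun pq => ({u | u pq.1 = u pq.2} : Finset (β → α)) := by
    intro u hu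
    simp only [Function.Injective, mem_filter, mem_univ, true_and, not_forall] at hu
    obtain ⟨p, q, hpq, hne⟩ := hu
    simp only [mem_biUnion, mem_offDiag, mem_univ, true_and, mem_filter, Prod.exists]
    exact ⟨p, q, hne, hpq⟩
  calc #{u : β → α | ¬ Function.Injective u} * Fintype.card α
      ≤ (∑ pq ∈ (univ : Finset β).offDiag, #{u : β → α | u pq.1 = u pq.2}) *
          Fintype.card α := by
        gcongr
        exact (card_le_card hcover).trans card_biUnion_le
    _ ≤ ∑ _pq ∈ (univ : Finset β).offDiag, Fintype.card α ^ Fintype.card β := by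
        rw [sum_mul]
        exact sum_le_sum fun pq hpq => card_filter_apply_eq_apply_mul_le (mem_offDiag.1 hpq).2.2
    _ ≤ Fintype.card β ^ 2 * Fintype.card α ^ Fintype.card β := by
        rw [sum_const, smul_eq_mul, offDiag_card, card_univ, sq]
        gcongr
        exact Nat.sub_le _ _

end Injectivity

section Grids

variable {α : Type*} [Fintype α] [DecidableEq α] {k t : ℕ}

def tupleLink (T : Finset (Fin (t + 1) → α)) (y : α) : Finset (Fin t → α) :=
  {x | Fin.cons y x ∈ T}

def completeGrids (k : ℕ) (T : Finset (Fin t → α)) : Finset (Fin t → Fin k → α) :=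
  {g | ∀ c : Fin t → Fin k, (fun i => g i (c i)) ∈ T}

lemma sum_card_tupleLink (T : Finset (Fin (t + 1) → α)) : ∑ y, #(tupleLink T y) = #T := by
  have h := card_filter_eq_sum_card_filter_cons (· ∈ T)
  rw [filter_univ_mem] at h
  simp only [h, card_filter, tupleLink]
  exact sum_comm

lemma card_completeGrids_succ (T : Finset (Fin (t + 1) → α)) :
    #(completeGrids k T) =
      ∑ g : Fin t → Fin k → α, #{y | g ∈ completeGrids k (tupleLink T y)} ^ k := by
  rw [completeGrids, card_filter_eq_sum_card_filter_cons]
  refine sum_congr rfl fun g _ => ?_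
  rw [← Fintype.card_piFinset_const]
  congr 1
  ext h
  have hcons : ∀ j c, (fun i => (Fin.cons h g : Fin (t + 1) → Fin k → α) i (Fin.cons j c i))
      = Fin.cons (h j) fun i => g i (c i) := by
    intro j c; ext i; cases i using Fin.cases <;> simp
  simp [Fintype.mem_piFinset, completeGrids, tupleLink, Fin.forall_fin_succ_pi, hcons]

lemma sum_card_filter_mem_completeGrids_tupleLink (T : Finset (Fin (t + 1) → α)) :
    ∑ g : Fin t → Fin k → α, #{y | g ∈ completeGrids k (tupleLink T y)} =
      ∑ y, #(completeGrids k (tupleLink T y)) := by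
  simp only [card_filter]
  rw [sum_comm]
  simp

lemma card_le_card_completeGrids_zero (T : Finset (Fin 0 → α)) :
    #T ≤ #(completeGrids k T) := by
  rcases T.eq_empty_or_nonempty with rfl | ⟨f, hf⟩
  · simp
  have : completeGrids k T = univ := eq_univ_of_forall fun g =>
    mem_filter.2 ⟨mem_univ _, fun c => Subsingleton.elim f (fun i => g i (c i)) ▸ hf⟩
  rw [this]
  exact card_le_univ T

theorem density_pow_le_density_completeGrids (hk : k ≠ 0) (T : Finset (Fin t → α)) :
    ((#T : ℝ) / Fintype.card α ^ t) ^ k ^ t ≤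
      #(completeGrids k T) / (Fintype.card α : ℝ) ^ (t * k) := by
  induction t with
  | zero => simpa using card_le_card_completeGrids_zero T
  | succ t ih =>
    have hK : k ^ t ≠ 0 := pow_ne_zero _ hk
    have hlinks : (#T : ℝ) / Fintype.card α ^ (t + 1) =
        (∑ y, (#(tupleLink T y) : ℝ) / Fintype.card α ^ t) / Fintype.card α := by
      rw [← sum_div, ← Nat.cast_sum, sum_card_tupleLink, pow_succ, div_div]
    have jensen_links := pow_sum_div_card_le_sum_pow_div_card
      (fun y => (by positivity : (0 : ℝ) ≤ #(tupleLink T y) / Fintype.card α ^ t)) hK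
    have jensen_grids := pow_sum_div_card_le_sum_pow_div_card
      (fun g : Fin t → Fin k → α => (by positivity :
        (0 : ℝ) ≤ #{y | g ∈ completeGrids k (tupleLink T y)} / Fintype.card α)) hk
    have hgrids : Fintype.card (Fin t → Fin k → α) = Fintype.card α ^ (t * k) := by
      simp [pow_mul, mul_comm t k]
    rw [hgrids] at jensen_grids
    generalize Fintype.card α = n at *
    calc ((#T : ℝ) / n ^ (t + 1)) ^ k ^ (t + 1)
        = (((∑ y, (#(tupleLink T y) : ℝ) / n ^ t) / n) ^ k ^ t) ^ k := by
          rw [hlinks, pow_succ, pow_mul]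
      _ ≤ ((∑ y, ((#(tupleLink T y) : ℝ) / n ^ t) ^ k ^ t) / n) ^ k :=
          pow_le_pow_left₀ (by positivity) jensen_links k
      _ ≤ ((∑ y, (#(completeGrids k (tupleLink T y)) : ℝ) / n ^ (t * k)) / n) ^ k := by
          gcongr with y
          exact ih _
      _ = ((∑ g : Fin t → Fin k → α,
              (#{y | g ∈ completeGrids k (tupleLink T y)} : ℝ) / n) / n ^ (t * k)) ^ k := by
          rw [← sum_div, ← sum_div, ← Nat.cast_sum, ← Nat.cast_sum,
            sum_card_filter_mem_completeGrids_tupleLink, div_div, div_div, mul_comm]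
      _ ≤ (∑ g : Fin t → Fin k → α,
              ((#{y | g ∈ completeGrids k (tupleLink T y)} : ℝ) / n) ^ k) / n ^ (t * k) :=
          mod_cast jensen_grids
      _ = #(completeGrids k T) / n ^ ((t + 1) * k) := by
          rw [card_completeGrids_succ]
          push_cast
          simp only [div_pow, ← sum_div, div_div, ← pow_add]
          ring_nf

end Grids

section Tuples

variable {α : Type*} [Fintype α] [DecidableEq α] {k t : ℕ}

def disjointCompleteTuples (k : ℕ) (T : Finset (Fin t → α)) : Finset (Fin t → Finset α) :=
  {A | (∀ i, #(A i) = k) ∧ (∀ i j, i ≠ j → Disjoint (A i) (A j)) ∧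
    (∀ v : Fin t → α, (∀ i, v i ∈ A i) → v ∈ T)}

lemma card_injective_completeGrids_le (T : Finset (Fin t → α)) :
    #{g ∈ completeGrids k T | Function.Injective (Function.uncurry g)} ≤
      k ^ (t * k) * #(disjointCompleteTuples k T) := by
  refine card_le_mul_card_image_of_maps_to (f := fun g i => univ.image (g i)) ?_ _ ?_
  · intro g hg
    simp only [mem_filter, mem_univ, true_and, completeGrids] at hg
    obtain ⟨hcomplete, hinj⟩ := hg
    have hrow : ∀ i, Function.Injective (g i) := fun i a b h => (Prod.mk.inj (hinj h)).2
    simp only [disjointCompleteTuples, mem_filter, mem_univ, true_and]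
    refine ⟨fun i => ?_, fun i j hij => ?_, fun v hv => ?_⟩
    · rw [card_image_of_injective _ (hrow i), card_univ, Fintype.card_fin]
    · rw [disjoint_left]
      intro x hxi hxj
      obtain ⟨a, -, rfl⟩ := mem_image.1 hxi
      obtain ⟨b, -, hb⟩ := mem_image.1 hxj
      exact hij (Prod.mk.inj (hinj hb.symm)).1
    · choose c _ hc using fun i => mem_image.1 (hv i)
      exact funext hc ▸ hcomplete c
  · intro A hA
    simp only [disjointCompleteTuples, mem_filter, mem_univ, true_and] at hA
    calc #{g ∈ {g ∈ completeGrids k T | Function.Injective (Function.uncurry g)} |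
            (fun i => univ.image (g i)) = A}
        ≤ #(Fintype.piFinset fun i => Fintype.piFinset fun _ : Fin k => A i) := by
          refine card_le_card fun g hg => ?_
          simp only [mem_filter] at hg
          simp only [Fintype.mem_piFinset, ← hg.2]
          exact fun i j => mem_image_of_mem _ (mem_univ j)
      _ = k ^ (t * k) := by simp [Fintype.card_piFinset, hA.1, ← pow_mul, mul_comm]

lemma card_completeGrids_mul_le (T : Finset (Fin t → α)) :
    #(completeGrids k T) * Fintype.card α ≤
      #{g ∈ completeGrids k T | Function.Injective (Function.uncurry g)} * Fintype.card α +
        (t * k) ^ 2 * Fintype.card α ^ (t * k) := by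
  have hbad : #{g ∈ completeGrids k T | ¬ Function.Injective (Function.uncurry g)} ≤
      #{u : Fin t × Fin k → α | ¬ Function.Injective u} :=
    calc _ ≤ #{g : Fin t → Fin k → α | ¬ Function.Injective (Function.uncurry g)} :=
          card_le_card (filter_subset_filter _ (subset_univ _))
      _ = #{u : Fin t × Fin k → α | ¬ Function.Injective u} :=
          card_equiv (Equiv.curry _ _ _).symm (by simp)
  have hcount := card_filter_not_injective_mul_le (α := α) (β := Fin t × Fin k)
  simp only [Fintype.card_prod, Fintype.card_fin] at hcount
  calc #(completeGrids k T) * Fintype.card α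
      = (#{g ∈ completeGrids k T | Function.Injective (Function.uncurry g)} +
          #{g ∈ completeGrids k T | ¬ Function.Injective (Function.uncurry g)}) *
            Fintype.card α := by
        rw [card_filter_add_card_filter_not]
    _ ≤ _ := by
        rw [add_mul]
        exact Nat.add_le_add_left ((Nat.mul_le_mul_right _ hbad).trans hcount) _

theorem half_mul_le_card_injective_completeGrids [Nonempty α] (hk : k ≠ 0)
    {T : Finset (Fin t → α)} {γ : ℝ} (hγ : 0 ≤ γ) (hT : γ * Fintype.card α ^ t ≤ #T)
    (hα : 2 * ((t * k) ^ 2 : ℕ) ≤ γ ^ k ^ t * Fintype.card α) :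
    γ ^ k ^ t / 2 * Fintype.card α ^ (t * k) ≤
      #{g ∈ completeGrids k T | Function.Injective (Function.uncurry g)} := by
  have hn : (0 : ℝ) < Fintype.card α := by exact_mod_cast Fintype.card_pos
  have hgrids : γ ^ k ^ t * Fintype.card α ^ (t * k) ≤ #(completeGrids k T) := by
    rw [← le_div_iff₀ (by positivity)]
    refine le_trans ?_ (density_pow_le_density_completeGrids hk T)
    gcongr
    rwa [le_div_iff₀ (by positivity)]
  have hsplit : (#(completeGrids k T) : ℝ) * Fintype.card α ≤
      #{g ∈ completeGrids k T | Function.Injective (Function.uncurry g)} * Fintype.card α +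
        ((t * k) ^ 2 : ℕ) * Fintype.card α ^ (t * k) := by
    exact_mod_cast card_completeGrids_mul_le T
  set N : ℝ := (Fintype.card α : ℝ) ^ (t * k)
  have hcross : γ ^ k ^ t * N * Fintype.card α ≤
      #{g ∈ completeGrids k T | Function.Injective (Function.uncurry g)} * Fintype.card α +
        γ ^ k ^ t * Fintype.card α / 2 * N :=
    calc γ ^ k ^ t * N * Fintype.card α ≤ #(completeGrids k T) * Fintype.card α := by gcongr
      _ ≤ _ := hsplit
      _ ≤ _ := by gcongr; linarith
  refine le_of_mul_le_mul_right ?_ hn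
  linarith

theorem mul_choose_pow_le_card_disjointCompleteTuples [Nonempty α] (hk : k ≠ 0)
    {T : Finset (Fin t → α)} {γ : ℝ} (hγ : 0 ≤ γ) (hT : γ * Fintype.card α ^ t ≤ #T)
    (hα : 2 * ((t * k) ^ 2 : ℕ) ≤ γ ^ k ^ t * Fintype.card α) :
    γ ^ k ^ t / (2 * k ^ (t * k)) * (Fintype.card α).choose k ^ t ≤
      #(disjointCompleteTuples k T) := by
  have hk0 : (0 : ℝ) < k := by exact_mod_cast Nat.pos_of_ne_zero hk
  have hinj := half_mul_le_card_injective_completeGrids hk hγ hT hα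
  have htuples : (#{g ∈ completeGrids k T | Function.Injective (Function.uncurry g)} : ℝ) ≤
      k ^ (t * k) * #(disjointCompleteTuples k T) := by
    exact_mod_cast card_injective_completeGrids_le T
  have hchoose : ((Fintype.card α).choose k : ℝ) ^ t ≤ Fintype.card α ^ (t * k) := by
    rw [mul_comm, pow_mul]
    gcongr
    exact_mod_cast Nat.choose_le_pow _ k
  calc γ ^ k ^ t / (2 * k ^ (t * k)) * ((Fintype.card α).choose k : ℝ) ^ t
      ≤ γ ^ k ^ t / (2 * k ^ (t * k)) * Fintype.card α ^ (t * k) := by gcongr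
    _ = γ ^ k ^ t / 2 * Fintype.card α ^ (t * k) / k ^ (t * k) := by ring
    _ ≤ #(disjointCompleteTuples k T) := by
      rw [div_le_iff₀ (pow_pos hk0 _)]
      linarith

end Tuples

theorem erdos_simonovits_ordered_general (k t : ℕ) (hk : 1 ≤ k)
    (γ : ℝ) (hγ0 : 0 < γ) :
    ∃ γ' : ℝ, 0 < γ' ∧ ∃ n₀ : ℕ, ∀ n ≥ n₀, ∀ T : Finset (Fin t → Fin n),
      (∀ f ∈ T, Function.Injective f) → γ * (n : ℝ) ^ t < T.card →
      γ' ≤ ((Finset.univ.filter (fun A : Fin t → Finset (Fin n) =>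
          (∀ i, (A i).card = k) ∧
          (∀ i j, i ≠ j → Disjoint (A i) (A j)) ∧
          (∀ v : Fin t → Fin n, (∀ i, v i ∈ A i) → v ∈ T))).card : ℝ) /
        ((n.choose k : ℝ)) ^ t := by
  have hc : 0 < γ ^ k ^ t := by positivity
  refine ⟨γ ^ k ^ t / (2 * k ^ (t * k)), by positivity,
    k + ⌈2 * ((t * k) ^ 2 : ℕ) / γ ^ k ^ t⌉₊, fun n hn T _ hT => ?_⟩
  have : NeZero n := ⟨by omega⟩
  have hlarge : 2 * ((t * k) ^ 2 : ℕ) ≤ γ ^ k ^ t * n := by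
    rw [← div_le_iff₀' hc]
    exact (Nat.le_ceil _).trans (by exact_mod_cast le_add_self.trans hn)
  rw [le_div_iff₀ (by have := Nat.choose_pos (show k ≤ n by omega); positivity)]
  have key := mul_choose_pow_le_card_disjointCompleteTuples (α := Fin n)
    (Nat.one_le_iff_ne_zero.mp hk) hγ0.le (by simpa using hT.le) (by simpa using hlarge)
  rw [Fintype.card_fin] at key
  exact key

/-- An ordered-tuple variant of a theorem of Erdős and Simonovits: for all
`k, t ≥ 1` and `0 < γ ≤ 1` there is `γ' > 0` such that for all large `n`, if
`T` is a family of ordered `t`-tuples of distinct elements of `{1,…,n}` with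
`|T| > γ·n^t`, then `t` independent uniformly random `k`-subsets
`A₁, …, A_t` of `{1,…,n}` are, with probability at least `γ'`, pairwise
disjoint and `T`-complete (every choice of `vᵢ ∈ Aᵢ` gives a tuple in `T`). -/
theorem erdos_simonovits_ordered (k t : ℕ) (hk : 1 ≤ k) (ht : 1 ≤ t)
    (γ : ℝ) (hγ0 : 0 < γ) (hγ1 : γ ≤ 1) :
    ∃ γ' : ℝ, 0 < γ' ∧ ∃ n₀ : ℕ, ∀ n ≥ n₀, ∀ T : Finset (Fin t → Fin n),
      (∀ f ∈ T, Function.Injective f) → γ * (n : ℝ) ^ t < T.card →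
      γ' ≤ ((Finset.univ.filter (fun A : Fin t → Finset (Fin n) =>
          (∀ i, (A i).card = k) ∧
          (∀ i j, i ≠ j → Disjoint (A i) (A j)) ∧
          (∀ v : Fin t → Fin n, (∀ i, v i ∈ A i) → v ∈ T))).card : ℝ) /
        ((n.choose k : ℝ)) ^ t :=
  erdos_simonovits_ordered_general k t hk γ hγ0
end
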